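/- arXiv:1701.08952 — 2 statements merged into one kernel-verified Lean document; each statement's English description precedes it below -/
import Mathlib

section
/- A forward complete control system Σ=(X,𝒰,φ) with equilibrium point 0 has the limit property at zero (0-LIM) and is uniformly stable at zero (0-ULS) if and only if Σ is globally asymptotically stable at zero (0-GAS). -/
/-!
Once 0-LIM has brought a trajectory into a ball on which the 0-ULS bound σ is below ε, the
cocycle property restarts the system from that point, so the trajectory stays below ε forever.
-/

open Set Filter

/-- Class `K`: continuous, strictly increasing on `[0,∞)` and vanishing at `0`. -/
def ClassK (γ : ℝ → ℝ) : Prop :=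
  ContinuousOn γ (Ici 0) ∧ StrictMonoOn γ (Ici 0) ∧ γ 0 = 0

/-- Class `K∞`: class `K` and unbounded. -/
def ClassKinf (γ : ℝ → ℝ) : Prop :=
  ClassK γ ∧ ∀ c : ℝ, ∃ r : ℝ, 0 ≤ r ∧ c ≤ γ r

/-- The class `K∞ ∪ {0}`. -/
def ClassKinf0 (γ : ℝ → ℝ) : Prop :=
  ClassKinf γ ∨ ∀ r : ℝ, 0 ≤ r → γ r = 0

/-- The class `K ∪ {0}`. -/
def ClassK0 (γ : ℝ → ℝ) : Prop :=
  ClassK γ ∨ ∀ r : ℝ, 0 ≤ r → γ r = 0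

/-- Class `L`: continuous, strictly decreasing on `[0,∞)` with limit `0` at infinity. -/
def ClassL (γ : ℝ → ℝ) : Prop :=
  ContinuousOn γ (Ici 0) ∧ StrictAntiOn γ (Ici 0) ∧ Tendsto γ atTop (nhds 0)

/-- Class `KL`. -/
def ClassKL (β : ℝ → ℝ → ℝ) : Prop :=
  ContinuousOn (fun p : ℝ × ℝ => β p.1 p.2) ((Ici 0) ×ˢ (Ici 0)) ∧
  (∀ t : ℝ, 0 ≤ t → ClassK (fun r => β r t)) ∧
  ∀ r : ℝ, 0 < r → StrictAntiOn (β r) (Ici 0) ∧ Tendsto (β r) atTop (nhds 0)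

/-- A forward complete control system `Σ = (X, 𝒰, φ)`: inputs are functions
`u : ℝ₊ → U` (modelled as functions on `ℝ`, with only `t ≥ 0` relevant);
the set `inputs` of admissible inputs carries a norm `Unorm`, is shift invariant and
closed under concatenation; the transition map `phi` satisfies the identity property,
causality, continuity in time and the cocycle property. -/
structure ControlSystem (X U : Type*) [NormedAddCommGroup X] [NormedSpace ℝ X] [Zero U] where
  /-- the set of admissible input functions -/
  inputs : Set (ℝ → U)
  /-- the norm of the input space -/
  Unorm : (ℝ → U) → ℝ
  Unorm_nonneg : ∀ u, 0 ≤ Unorm u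
  /-- the zero input is admissible -/
  zero_mem : (fun _ : ℝ => (0 : U)) ∈ inputs
  Unorm_zero : Unorm (fun _ : ℝ => (0 : U)) = 0
  /-- the transition map `φ(t,x,u)` -/
  phi : ℝ → X → (ℝ → U) → X
  /-- axiom of shift invariance -/
  shift_mem : ∀ u ∈ inputs, ∀ τ : ℝ, 0 ≤ τ → (fun s => u (s + τ)) ∈ inputs
  shift_norm : ∀ u ∈ inputs, ∀ τ : ℝ, 0 ≤ τ → Unorm (fun s => u (s + τ)) ≤ Unorm u
  /-- axiom of concatenation -/
  concat_mem : ∀ u₁ ∈ inputs, ∀ u₂ ∈ inputs, ∀ t : ℝ, 0 < t →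
    (fun s => if s ≤ t then u₁ s else u₂ (s - t)) ∈ inputs
  /-- identity property -/
  identity : ∀ x u, phi 0 x u = x
  /-- causality -/
  causality : ∀ t : ℝ, 0 ≤ t → ∀ x : X, ∀ u ∈ inputs, ∀ v ∈ inputs,
    (∀ s ∈ Icc (0:ℝ) t, u s = v s) → phi t x u = phi t x v
  /-- continuity of trajectories -/
  cont : ∀ x : X, ∀ u ∈ inputs, ContinuousOn (fun t => phi t x u) (Ici 0)
  /-- cocycle property -/
  cocycle : ∀ t : ℝ, 0 ≤ t → ∀ h : ℝ, 0 ≤ h → ∀ x : X, ∀ u ∈ inputs,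
    phi h (phi t x u) (fun s => u (s + t)) = phi (t + h) x u

namespace ControlSystem

variable {X U : Type*} [NormedAddCommGroup X] [NormedSpace ℝ X] [Zero U]

/-- the zero input -/
def zeroIn : ℝ → U := fun _ => 0

/-- Limit property at zero: `inf_{t ≥ 0} ‖φ(t,x,0)‖ = 0` for every `x`. -/
def ZeroLIM (S : ControlSystem X U) : Prop :=
  ∀ x : X, ∀ ε : ℝ, 0 < ε → ∃ t : ℝ, 0 ≤ t ∧ ‖S.phi t x zeroIn‖ < ε

/-- Uniform stability at zero of the undisturbed system. -/
def ZeroULS (S : ControlSystem X U) : Prop :=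
  ∃ σ, ClassKinf σ ∧ ∃ r : ℝ, 0 < r ∧
    ∀ x : X, ‖x‖ ≤ r → ∀ t : ℝ, 0 ≤ t → ‖S.phi t x zeroIn‖ ≤ σ ‖x‖

/-- Global attractivity at zero of the undisturbed system. -/
def ZeroGATT (S : ControlSystem X U) : Prop :=
  ∀ x : X, Tendsto (fun t : ℝ => ‖S.phi t x zeroIn‖) atTop (nhds 0)

/-- Global asymptotic stability at zero: `0-ULS` together with `0-GATT`. -/
def ZeroGAS (S : ControlSystem X U) : Prop :=
  S.ZeroULS ∧ S.ZeroGATT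


lemma _root_.ClassK.exists_pos_lt {γ : ℝ → ℝ} (hγ : ClassK γ) {ε : ℝ} (hε : 0 < ε) :
    ∃ δ > 0, γ δ < ε := by
  obtain ⟨hcont, -, hzero⟩ := hγ
  have hlim : Tendsto γ (nhdsWithin 0 (Ioi 0)) (nhds 0) := by
    have := hcont.continuousWithinAt (self_mem_Ici (a := (0 : ℝ)))
    rw [ContinuousWithinAt, hzero] at this
    exact this.mono_left (nhdsWithin_mono _ Ioi_subset_Ici_self)
  exact ((hlim.eventually (gt_mem_nhds hε)).and self_mem_nhdsWithin).exists.imp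
    fun δ hδ => ⟨hδ.2, hδ.1⟩

lemma phi_zeroIn_eq_phi_sub (S : ControlSystem X U) (x : X) {t₀ t : ℝ} (ht₀ : 0 ≤ t₀)
    (ht : t₀ ≤ t) : S.phi t x zeroIn = S.phi (t - t₀) (S.phi t₀ x zeroIn) zeroIn := by
  have := S.cocycle t₀ ht₀ (t - t₀) (sub_nonneg.2 ht) x zeroIn S.zero_mem
  rwa [add_sub_cancel, eq_comm] at this

lemma ZeroULS.exists_pos_forall_norm_phi_lt {S : ControlSystem X U} (hS : S.ZeroULS) {ε : ℝ}
    (hε : 0 < ε) : ∃ δ > 0, ∀ y : X, ‖y‖ < δ → ∀ t : ℝ, 0 ≤ t → ‖S.phi t y zeroIn‖ < ε := by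
  obtain ⟨σ, hσ, r, hr, hbound⟩ := hS
  obtain ⟨δ, hδ, hσδ⟩ := hσ.1.exists_pos_lt hε
  refine ⟨min δ r, lt_min hδ hr, fun y hy t ht => ?_⟩
  calc ‖S.phi t y zeroIn‖ ≤ σ ‖y‖ := hbound y (hy.le.trans (min_le_right _ _)) t ht
    _ ≤ σ δ := hσ.1.2.1.monotoneOn (norm_nonneg y) hδ.le (hy.le.trans (min_le_left _ _))
    _ < ε := hσδ

lemma ZeroLIM.zeroGATT {S : ControlSystem X U} (hlim : S.ZeroLIM) (huls : S.ZeroULS) :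
    S.ZeroGATT := by
  refine fun x => tendsto_order.2 ⟨fun a ha => Eventually.of_forall fun t =>
    ha.trans_le (norm_nonneg _), fun ε hε => ?_⟩
  obtain ⟨δ, hδ, hstable⟩ := huls.exists_pos_forall_norm_phi_lt hε
  obtain ⟨t₀, ht₀, hsmall⟩ := hlim x δ hδ
  filter_upwards [eventually_ge_atTop t₀] with t ht
  rw [S.phi_zeroIn_eq_phi_sub x ht₀ ht]
  exact hstable _ hsmall _ (sub_nonneg.2 ht)

lemma ZeroGATT.zeroLIM {S : ControlSystem X U} (hS : S.ZeroGATT) : S.ZeroLIM := fun x _ hε =>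
  (((hS x).eventually (gt_mem_nhds hε)).and (eventually_ge_atTop 0)).exists.imp
    fun _ ht => ⟨ht.2, ht.1⟩

theorem ZeroLIM_and_ZeroULS_iff_ZeroGAS_general (S : ControlSystem X U) :
    (S.ZeroLIM ∧ S.ZeroULS) ↔ S.ZeroGAS :=
  ⟨fun ⟨hlim, huls⟩ => ⟨huls, hlim.zeroGATT huls⟩, fun ⟨huls, hgatt⟩ => ⟨hgatt.zeroLIM, huls⟩⟩

/-- A forward complete control system with equilibrium point `0` is 0-LIM and 0-ULS
if and only if it is 0-GAS. -/
theorem ZeroLIM_and_ZeroULS_iff_ZeroGAS (S : ControlSystem X U)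
    (heq : ∀ t : ℝ, 0 ≤ t → S.phi t 0 zeroIn = 0) :
    (S.ZeroLIM ∧ S.ZeroULS) ↔ S.ZeroGAS :=
  ZeroLIM_and_ZeroULS_iff_ZeroGAS_general S

end ControlSystem
end

section
/- Let Σ=(X,𝒰,φ) be a forward complete control system that has the uniform limit property (ULIM), is uniformly stable at zero (0-ULS) and has bounded reachability sets (BRS). Then Σ is uniformly globally asymptotically stable at zero (0-UGAS), i.e., there exists β∈KL such that ‖φ(t,x,0)‖_X ≤ β(‖x‖_X,t) for all x∈X and all t≥0. -/
/-!
At the zero input, ULIM makes every trajectory starting in the ball of radius `R` enter any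
prescribed ball around `0` within a time depending only on `R`; local stability keeps it small
from then on, and BRS bounds it before that time. So trajectories are uniformly bounded and
uniformly attracted to `0`. The `KL` bound is then a product `α ‖x‖ * ℓ t`: with `κ ∈ K`
dominating `(1 + ‖x‖) ‖φ(t,x,0)‖`, the choice `α = κ + √κ` makes `‖φ(t,x,0)‖ / α ‖x‖` tend to `0`
uniformly in `x` (near `0` thanks to `√κ`, for large `‖x‖` thanks to the weight `1 + ‖x‖`, in
between by uniform attractivity), and `ℓ ∈ L` is a continuous majorant of the supremum of these
quotients.
-/

open Set Filter

open scoped Topology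

namespace ClassK

variable {γ : ℝ → ℝ}

theorem nonneg (hγ : ClassK γ) {r : ℝ} (hr : 0 ≤ r) : 0 ≤ γ r := by
  simpa [hγ.2.2] using hγ.2.1.monotoneOn (mem_Ici.2 le_rfl) (mem_Ici.2 hr) hr

theorem pos (hγ : ClassK γ) {r : ℝ} (hr : 0 < r) : 0 < γ r := by
  simpa [hγ.2.2] using hγ.2.1 (mem_Ici.2 le_rfl) (mem_Ici.2 hr.le) hr

theorem exists_pos_lt_s19 (hγ : ClassK γ) {ε : ℝ} (hε : 0 < ε) : ∃ δ, 0 < δ ∧ γ δ < ε := by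
  have hγ0 : Tendsto γ (𝓝[>] 0) (𝓝 0) := by
    have := hγ.1 0 (mem_Ici.2 le_rfl)
    rw [ContinuousWithinAt, hγ.2.2] at this
    exact this.mono_left (nhdsWithin_mono _ Ioi_subset_Ici_self)
  obtain ⟨δ, hδε, hδ⟩ :=
    ((hγ0.eventually (eventually_lt_nhds hε)).and eventually_mem_nhdsWithin).exists
  exact ⟨δ, hδ, hδε⟩

theorem const_mul (hγ : ClassK γ) {c : ℝ} (hc : 0 < c) : ClassK (fun r => c * γ r) :=
  ⟨continuousOn_const.mul hγ.1, fun _ ha _ hb hab => mul_lt_mul_of_pos_left (hγ.2.1 ha hb hab) hc,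
    by simp [hγ.2.2]⟩

theorem add_sqrt (hγ : ClassK γ) : ClassK (fun r => γ r + √(γ r)) :=
  ⟨hγ.1.add hγ.1.sqrt, fun _ ha _ hb hab =>
    add_lt_add (hγ.2.1 ha hb hab) (Real.sqrt_lt_sqrt (hγ.nonneg ha) (hγ.2.1 ha hb hab)),
    by simp [hγ.2.2]⟩

end ClassK

theorem ClassL.pos {ℓ : ℝ → ℝ} (hℓ : ClassL ℓ) {t : ℝ} (ht : 0 ≤ t) : 0 < ℓ t := by
  have hnext : 0 ≤ ℓ (t + 1) :=
    le_of_tendsto hℓ.2.2 ((eventually_ge_atTop (t + 1)).mono fun s hs =>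
      hℓ.2.1.antitoneOn (mem_Ici.2 (by linarith)) (mem_Ici.2 (by linarith)) hs)
  exact hnext.trans_lt (hℓ.2.1 (mem_Ici.2 ht) (mem_Ici.2 (by linarith)) (by linarith))

theorem ClassK.mul_classL {α ℓ : ℝ → ℝ} (hα : ClassK α) (hℓ : ClassL ℓ) :
    ClassKL (fun r t => α r * ℓ t) := by
  refine ⟨?_, fun t ht => ?_, fun r hr => ⟨?_, ?_⟩⟩
  · exact (hα.1.comp continuousOn_fst fun p hp => hp.1).mul
      (hℓ.1.comp continuousOn_snd fun p hp => hp.2)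
  · exact ⟨hα.1.mul continuousOn_const,
      fun _ ha _ hb hab => mul_lt_mul_of_pos_right (hα.2.1 ha hb hab) (hℓ.pos ht),
      by simp [hα.2.2]⟩
  · exact fun _ ha _ hb hab => mul_lt_mul_of_pos_left (hℓ.2.1 ha hb hab) (hα.pos hr)
  · simpa using hℓ.2.2.const_mul (α r)

theorem Monotone.exists_continuous_majorant {g : ℝ → ℝ} (hg : Monotone g) :
    ∃ H : ℝ → ℝ, Continuous H ∧ Monotone H ∧ (∀ r, g r ≤ H r) ∧ ∀ r, H r ≤ g (r + 1) := by
  have hint : ∀ a b : ℝ, IntervalIntegrable g MeasureTheory.volume a b :=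
    fun _ _ => hg.intervalIntegrable
  refine ⟨fun r => ∫ s in r..r + 1, g s, ?_, fun a b hab => ?_, fun r => ?_, fun r => ?_⟩
  · have hprim : Continuous fun b => ∫ s in (0 : ℝ)..b, g s :=
      intervalIntegral.continuous_primitive hint 0
    have hdiff : (fun r => ∫ s in r..r + 1, g s) =
        fun r => (∫ s in (0 : ℝ)..r + 1, g s) - ∫ s in (0 : ℝ)..r, g s :=
      funext fun r => (intervalIntegral.integral_interval_sub_left (hint 0 _) (hint 0 _)).symm
    rw [hdiff]
    exact (hprim.comp (continuous_add_const 1)).sub hprim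
  · calc ∫ s in a..a + 1, g s ≤ ∫ s in a..a + 1, g (s + (b - a)) :=
          intervalIntegral.integral_mono_on (by linarith) (hint _ _)
            (hg.comp (monotone_id.add_const _)).intervalIntegrable
            fun s _ => hg (by linarith)
      _ = ∫ s in b..b + 1, g s := by
          rw [intervalIntegral.integral_comp_add_right g (b - a)]
          ring_nf
  · simpa using intervalIntegral.integral_mono_on (by linarith) intervalIntegrable_const
      (hint r (r + 1)) fun s hs => hg hs.1
  · simpa using intervalIntegral.integral_mono_on (by linarith) (hint r (r + 1))
      intervalIntegrable_const fun s hs => hg hs.2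

theorem Antitone.exists_continuous_majorant {ρ : ℝ → ℝ} (hρ : Antitone ρ) :
    ∃ H : ℝ → ℝ, Continuous H ∧ Antitone H ∧ (∀ t, ρ t ≤ H t) ∧ ∀ t, H t ≤ ρ (t - 1) := by
  obtain ⟨H, hcont, hmono, hle, hge⟩ :=
    Monotone.exists_continuous_majorant (g := fun s => ρ (-s)) fun _ _ h => hρ (neg_le_neg h)
  refine ⟨fun t => H (-t), hcont.comp continuous_neg, fun _ _ h => hmono (neg_le_neg h),
    fun t => by simpa using hle (-t), fun t => ?_⟩
  convert hge (-t) using 2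
  ring

theorem exists_classL_ge {ρ : ℝ → ℝ} (hρ : Antitone ρ) (hlim : Tendsto ρ atTop (𝓝 0)) :
    ∃ ℓ, ClassL ℓ ∧ ∀ t, ρ t ≤ ℓ t := by
  obtain ⟨H, hcont, hanti, hle, hge⟩ := hρ.exists_continuous_majorant
  have hH : Tendsto H atTop (𝓝 0) :=
    tendsto_of_tendsto_of_tendsto_of_le_of_le tendsto_const_nhds
      (hlim.comp (tendsto_atTop_add_const_right atTop (-1) tendsto_id))
      (fun t => (hρ.le_of_tendsto hlim t).trans (hle t)) hge
  refine ⟨fun t => H t + Real.exp (-t), ⟨(hcont.add (Real.continuous_exp.comp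
    continuous_neg)).continuousOn, fun a _ b _ hab => ?_, ?_⟩, fun t => ?_⟩
  · exact add_lt_add_of_le_of_lt (hanti hab.le) (Real.exp_lt_exp.2 (neg_lt_neg hab))
  · simpa using hH.add Real.tendsto_exp_neg_atTop_nhds_zero
  · linarith [hle t, Real.exp_pos (-t)]

theorem exists_classK_ge {g σ : ℝ → ℝ} (hg : Monotone g) (hg₀ : 0 ≤ g 0) (hσ : ClassK σ)
    {r₀ : ℝ} (hr₀ : 0 < r₀) (hgσ : ∀ r, 0 ≤ r → r ≤ r₀ → g r ≤ σ r) :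
    ∃ κ, ClassK κ ∧ ∀ r, 0 ≤ r → g r ≤ κ r := by
  obtain ⟨H, hcont, hmono, hle, -⟩ := hg.exists_continuous_majorant
  have hH : ∀ r, 0 ≤ r → 0 ≤ H r := fun r hr => hg₀.trans ((hg hr).trans (hle r))
  have hmin : ∀ r, 0 ≤ r → 0 ≤ min r r₀ := fun r hr => le_min hr hr₀.le
  have hσmin : ∀ r, 0 ≤ r → 0 ≤ σ (min r r₀) := fun r hr => hσ.nonneg (hmin r hr)
  -- `σ` covers `r ≤ r₀`, `H` covers `r ≥ r₀`, and the summand `r` makes `κ` strictly increasing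
  refine ⟨fun r => σ (min r r₀) + r * H r / r₀ + r,
    ⟨?_, fun a ha b hb hab => ?_, by simp [min_eq_left hr₀.le, hσ.2.2]⟩, fun r hr => ?_⟩
  · exact ((hσ.1.comp (continuous_id.min continuous_const).continuousOn
      fun r hr => mem_Ici.2 (hmin r hr)).add
      ((continuous_id.mul hcont).div_const r₀).continuousOn).add continuousOn_id
  · have hσab : σ (min a r₀) ≤ σ (min b r₀) :=
      hσ.2.1.monotoneOn (hmin a ha) (hmin b hb) (min_le_min_right _ hab.le)
    have hHab : a * H a / r₀ ≤ b * H b / r₀ :=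
      div_le_div_of_nonneg_right (mul_le_mul hab.le (hmono hab.le) (hH a ha) hb) hr₀.le
    simp only
    linarith
  · show g r ≤ σ (min r r₀) + r * H r / r₀ + r
    have hrH : 0 ≤ r * H r / r₀ := div_nonneg (mul_nonneg hr (hH r hr)) hr₀.le
    rcases le_total r r₀ with hsmall | hlarge
    · have := hgσ r hr hsmall
      rw [min_eq_left hsmall]
      linarith
    · have hHr : H r ≤ r * H r / r₀ := by
        rw [le_div_iff₀ hr₀]
        nlinarith [hH r hr]
      linarith [hle r, hσmin r hr]

theorem exists_classL_ge_of_uniform_decay {J : Type*} (f : J → ℝ → ℝ) {C : ℝ}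
    (hC : ∀ j t, 0 ≤ t → f j t ≤ C) (hdecay : ∀ ε, 0 < ε → ∃ T, ∀ j t, T ≤ t → f j t ≤ ε) :
    ∃ ℓ, ClassL ℓ ∧ ∀ j t, 0 ≤ t → f j t ≤ ℓ t := by
  set P : ℝ → Set ℝ := fun t => insert 0 ((fun p : J × ℝ => f p.1 p.2) '' {p | max t 0 ≤ p.2})
  have hP : ∀ t, BddAbove (P t) := by
    refine fun t => ⟨max C 0, ?_⟩
    rintro _ (rfl | ⟨⟨j, s⟩, hs, rfl⟩)
    exacts [le_max_right _ _, (hC j s ((le_max_right _ _).trans hs)).trans (le_max_left _ _)]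
  set ρ := fun t => sSup (P t)
  have hanti : Antitone ρ := fun a b hab => csSup_le_csSup (hP a) (insert_nonempty _ _)
    (insert_subset_insert (image_mono fun _ hp => (max_le_max_right 0 hab).trans hp))
  have hlim : Tendsto ρ atTop (𝓝 0) := by
    refine tendsto_order.2 ⟨fun a ha => Eventually.of_forall fun t =>
      ha.trans_le (le_csSup (hP t) (mem_insert _ _)), fun a ha => ?_⟩
    obtain ⟨T, hT⟩ := hdecay (a / 2) (half_pos ha)
    filter_upwards [eventually_ge_atTop T] with t ht
    refine (csSup_le (insert_nonempty _ _) ?_).trans_lt (half_lt_self ha)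
    rintro _ (rfl | ⟨⟨j, s⟩, hs, rfl⟩)
    exacts [(half_pos ha).le, hT j s (ht.trans ((le_max_left _ _).trans hs))]
  obtain ⟨ℓ, hℓ, hρℓ⟩ := exists_classL_ge hanti hlim
  exact ⟨ℓ, hℓ, fun j t ht =>
    (le_csSup (hP t) (mem_insert_of_mem _ ⟨(j, t), max_le le_rfl ht, rfl⟩)).trans (hρℓ t)⟩

section UniformStability

variable {ι : Type*} (n : ι → ℝ) (y : ι → ℝ → ℝ)

theorem exists_classK_weighted_bound (hn : ∀ i, 0 ≤ n i) (hy : ∀ i t, 0 ≤ y i t)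
    {σ : ℝ → ℝ} (hσ : ClassK σ) {r₀ : ℝ} (hr₀ : 0 < r₀)
    (hstab : ∀ i, n i ≤ r₀ → ∀ t, 0 ≤ t → y i t ≤ σ (n i))
    (hbdd : ∀ R, 0 < R → ∃ M, ∀ i, n i ≤ R → ∀ t, 0 ≤ t → y i t ≤ M) :
    ∃ κ, ClassK κ ∧ ∀ i t, 0 ≤ t → (1 + n i) * y i t ≤ κ (n i) := by
  set Q : ℝ → Set ℝ := fun r =>
    insert 0 ((fun p : ι × ℝ => (1 + n p.1) * y p.1 p.2) '' {p | n p.1 ≤ r ∧ 0 ≤ p.2})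
  have hQ : ∀ r, BddAbove (Q r) := by
    intro r
    obtain ⟨M, hM⟩ := hbdd (max r 0 + 1) (by positivity)
    refine ⟨(1 + max r 0) * max M 0, ?_⟩
    rintro _ (rfl | ⟨⟨i, t⟩, ⟨hi, ht⟩, rfl⟩)
    · positivity
    · exact mul_le_mul (by linarith [le_max_left r 0])
        ((hM i (by linarith [le_max_left r 0]) t ht).trans (le_max_left _ _)) (hy i t)
        (by positivity)
  have hmono : Monotone fun r => sSup (Q r) := fun a b hab =>
    csSup_le_csSup (hQ b) (insert_nonempty _ _)
      (insert_subset_insert (image_mono fun _ hp => ⟨hp.1.trans hab, hp.2⟩))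
  have hσQ : ∀ r, 0 ≤ r → r ≤ r₀ → sSup (Q r) ≤ (1 + r₀) * σ r := by
    intro r hr hrr₀
    refine csSup_le (insert_nonempty _ _) ?_
    rintro _ (rfl | ⟨⟨i, t⟩, ⟨hi, ht⟩, rfl⟩)
    · exact mul_nonneg (by linarith) (hσ.nonneg hr)
    · exact mul_le_mul (by linarith) ((hstab i (hi.trans hrr₀) t ht).trans
        (hσ.2.1.monotoneOn (hn i) hr hi)) (hy i t) (by linarith)
  obtain ⟨κ, hκ, hQκ⟩ := exists_classK_ge hmono (le_csSup (hQ 0) (mem_insert _ _))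
    (hσ.const_mul (by linarith : 0 < 1 + r₀)) hr₀ hσQ
  exact ⟨κ, hκ, fun i t ht =>
    (le_csSup (hQ (n i)) (mem_insert_of_mem _ ⟨(i, t), ⟨le_rfl, ht⟩, rfl⟩)).trans (hQκ _ (hn i))⟩

theorem uniform_decay_of_classK_weighted_bound (hn : ∀ i, 0 ≤ n i) (hy : ∀ i t, 0 ≤ y i t)
    {κ : ℝ → ℝ} (hκ : ClassK κ) (hκy : ∀ i t, 0 ≤ t → (1 + n i) * y i t ≤ κ (n i))
    (hattr : ∀ ε, 0 < ε → ∀ R, 0 < R → ∃ T, ∀ i, n i ≤ R → ∀ t, T ≤ t → y i t ≤ ε)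
    {ε : ℝ} (hε : 0 < ε) : ∃ T, ∀ i t, T ≤ t → y i t ≤ ε * (κ (n i) + √(κ (n i))) := by
  obtain ⟨δ, hδ, hκδ⟩ := hκ.exists_pos_lt_s19 (pow_pos hε 2)
  have hα := hκ.add_sqrt
  obtain ⟨T, hT⟩ := hattr (ε * (κ δ + √(κ δ))) (mul_pos hε (hα.pos hδ)) (max δ ε⁻¹)
    (lt_max_of_lt_left hδ)
  refine ⟨max T 0, fun i t ht => ?_⟩
  have hκy' := hκy i t ((le_max_right _ _).trans ht)
  have hsqrt : 0 ≤ √(κ (n i)) := Real.sqrt_nonneg _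
  rcases le_total (n i) δ with hsmall | hδn
  · -- `y ≤ κ = √κ * √κ`, and `√κ ≤ ε` near `0`
    have hsε : √(κ (n i)) ≤ ε :=
      Real.sqrt_le_iff.2 ⟨hε.le, (hκ.2.1.monotoneOn (hn i) hδ.le hsmall).trans hκδ.le⟩
    have hsq := Real.mul_self_sqrt (hκ.nonneg (hn i))
    nlinarith [hy i t, hn i, mul_le_mul_of_nonneg_right hsε hsqrt, hκ.nonneg (hn i)]
  rcases le_or_gt (n i) (max δ ε⁻¹) with hmid | hlarge
  · calc y i t ≤ ε * (κ δ + √(κ δ)) := hT i hmid t ((le_max_left _ _).trans ht)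
      _ ≤ ε * (κ (n i) + √(κ (n i))) :=
        mul_le_mul_of_nonneg_left (hα.2.1.monotoneOn hδ.le (hn i) hδn) hε.le
  · -- the weight `1 + n i` exceeds `ε⁻¹`
    have hεn : 1 ≤ ε * (1 + n i) := by
      have := (inv_lt_iff_one_lt_mul₀' hε).1 ((le_max_right _ _).trans_lt hlarge)
      linarith
    calc y i t ≤ ε * (1 + n i) * y i t := le_mul_of_one_le_left (hy i t) hεn
      _ ≤ ε * κ (n i) := by rw [mul_assoc]; exact mul_le_mul_of_nonneg_left hκy' hε.le
      _ ≤ ε * (κ (n i) + √(κ (n i))) := by nlinarith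

theorem exists_classKL_of_uniformlyStable_of_uniformlyAttractive (hn : ∀ i, 0 ≤ n i)
    (hy : ∀ i t, 0 ≤ y i t) {σ : ℝ → ℝ} (hσ : ClassK σ) {r₀ : ℝ} (hr₀ : 0 < r₀)
    (hstab : ∀ i, n i ≤ r₀ → ∀ t, 0 ≤ t → y i t ≤ σ (n i))
    (hbdd : ∀ R, 0 < R → ∃ M, ∀ i, n i ≤ R → ∀ t, 0 ≤ t → y i t ≤ M)
    (hattr : ∀ ε, 0 < ε → ∀ R, 0 < R → ∃ T, ∀ i, n i ≤ R → ∀ t, T ≤ t → y i t ≤ ε) :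
    ∃ β, ClassKL β ∧ ∀ i t, 0 ≤ t → y i t ≤ β (n i) t := by
  obtain ⟨κ, hκ, hκy⟩ := exists_classK_weighted_bound n y hn hy hσ hr₀ hstab hbdd
  set α := fun r => κ r + √(κ r)
  have hα : ClassK α := hκ.add_sqrt
  have hyα : ∀ i t, 0 ≤ t → y i t ≤ α (n i) := fun i t ht =>
    (le_mul_of_one_le_left (hy i t) (by linarith [hn i])).trans
      ((hκy i t ht).trans (le_add_of_nonneg_right (Real.sqrt_nonneg _)))
  -- where `α (n i) = 0` the quotient is `0` by convention, which is harmless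
  obtain ⟨ℓ, hℓ, hyℓ⟩ := exists_classL_ge_of_uniform_decay (fun i t => y i t / α (n i)) (C := 1)
    (fun i t ht => div_le_one_of_le₀ (hyα i t ht) (hα.nonneg (hn i)))
    fun ε hε => (uniform_decay_of_classK_weighted_bound n y hn hy hκ hκy hattr hε).imp
      fun _ hT i t ht => div_le_of_le_mul₀ (hα.nonneg (hn i)) hε.le (hT i t ht)
  refine ⟨fun r t => α r * ℓ t, hα.mul_classL hℓ, fun i t ht => ?_⟩
  show y i t ≤ α (n i) * ℓ t
  rcases (hn i).eq_or_lt with hzero | hpos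
  · have := hyα i t ht
    rw [← hzero, hα.2.2] at this ⊢
    simpa using this
  · exact (div_le_iff₀' (hα.pos hpos)).1 (hyℓ i t ht)

end UniformStability

namespace ControlSystem

variable {X U : Type*} [NormedAddCommGroup X] [NormedSpace ℝ X] [Zero U]

/-- Uniform limit property. -/
def ULIM (S : ControlSystem X U) : Prop :=
  ∃ γ, ClassK0 γ ∧
    ∀ ε : ℝ, 0 < ε → ∀ r : ℝ, 0 < r → ∃ τ : ℝ, 0 ≤ τ ∧
      ∀ x : X, ‖x‖ ≤ r → ∀ u ∈ S.inputs, ∃ t ∈ Icc (0:ℝ) τ,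
        ‖S.phi t x u‖ ≤ ε + γ (S.Unorm u)

/-- Bounded reachability sets. -/
def BRS (S : ControlSystem X U) : Prop :=
  ∀ C : ℝ, 0 < C → ∀ τ : ℝ, 0 < τ → ∃ M : ℝ,
    ∀ x : X, ‖x‖ ≤ C → ∀ u ∈ S.inputs, S.Unorm u ≤ C → ∀ t ∈ Icc (0:ℝ) τ,
      ‖S.phi t x u‖ ≤ M

theorem Unorm_zeroIn (S : ControlSystem X U) : S.Unorm zeroIn = 0 := S.Unorm_zero

theorem ULIM.exists_norm_phi_zeroIn_le {S : ControlSystem X U} (hS : S.ULIM) {ε R : ℝ}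
    (hε : 0 < ε) (hR : 0 < R) :
    ∃ τ, 0 ≤ τ ∧ ∀ x : X, ‖x‖ ≤ R → ∃ t ∈ Icc (0 : ℝ) τ, ‖S.phi t x zeroIn‖ ≤ ε := by
  obtain ⟨γ, hγ, hlim⟩ := hS
  have hγ0 : γ 0 = 0 := hγ.elim (fun h => h.2.2) fun h => h 0 le_rfl
  obtain ⟨τ, hτ, hτx⟩ := hlim ε hε R hR
  refine ⟨τ, hτ, fun x hx => ?_⟩
  simpa [S.Unorm_zeroIn, hγ0] using hτx x hx zeroIn S.zero_mem

section Trajectories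

variable (S : ControlSystem X U)

theorem phi_zeroIn_add {t h : ℝ} (ht : 0 ≤ t) (hh : 0 ≤ h) (x : X) :
    S.phi h (S.phi t x zeroIn) zeroIn = S.phi (t + h) x zeroIn :=
  S.cocycle t ht h hh x zeroIn S.zero_mem

variable {σ : ℝ → ℝ} {r₀ : ℝ}

theorem norm_phi_zeroIn_le_of_norm_le
    (hULS : ∀ x : X, ‖x‖ ≤ r₀ → ∀ t, 0 ≤ t → ‖S.phi t x zeroIn‖ ≤ σ ‖x‖)
    {x : X} {t₁ t₂ : ℝ} (ht₁ : 0 ≤ t₁) (h₁₂ : t₁ ≤ t₂)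
    (hsmall : ‖S.phi t₁ x zeroIn‖ ≤ r₀) :
    ‖S.phi t₂ x zeroIn‖ ≤ σ ‖S.phi t₁ x zeroIn‖ := by
  have := hULS _ hsmall (t₂ - t₁) (sub_nonneg.2 h₁₂)
  rwa [S.phi_zeroIn_add ht₁ (sub_nonneg.2 h₁₂), add_sub_cancel] at this

theorem exists_uniform_bound_phi_zeroIn
    (hULS : ∀ x : X, ‖x‖ ≤ r₀ → ∀ t, 0 ≤ t → ‖S.phi t x zeroIn‖ ≤ σ ‖x‖)
    (hULIM : S.ULIM) (hBRS : S.BRS) (hσ : ClassK σ)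
    (hr₀ : 0 < r₀) {R : ℝ} (hR : 0 < R) :
    ∃ M, ∀ x : X, ‖x‖ ≤ R → ∀ t, 0 ≤ t → ‖S.phi t x zeroIn‖ ≤ M := by
  obtain ⟨τ, hτ, hreach⟩ := hULIM.exists_norm_phi_zeroIn_le hr₀ hR
  obtain ⟨M, hM⟩ := hBRS R hR (τ + 1) (by linarith)
  refine ⟨max M (σ r₀), fun x hx t ht => ?_⟩
  rcases le_total t τ with hbefore | hafter
  · exact le_max_of_le_left (hM x hx zeroIn S.zero_mem (by rw [S.Unorm_zeroIn]; exact hR.le)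
      t ⟨ht, by linarith⟩)
  · obtain ⟨s, hs, hsmall⟩ := hreach x hx
    exact le_max_of_le_right
      ((S.norm_phi_zeroIn_le_of_norm_le hULS hs.1 (hs.2.trans hafter) hsmall).trans
        (hσ.2.1.monotoneOn (norm_nonneg _) hr₀.le hsmall))

theorem exists_uniform_attraction_phi_zeroIn
    (hULS : ∀ x : X, ‖x‖ ≤ r₀ → ∀ t, 0 ≤ t → ‖S.phi t x zeroIn‖ ≤ σ ‖x‖)
    (hULIM : S.ULIM) (hσ : ClassK σ) (hr₀ : 0 < r₀)
    {ε R : ℝ} (hε : 0 < ε) (hR : 0 < R) :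
    ∃ T, ∀ x : X, ‖x‖ ≤ R → ∀ t, T ≤ t → ‖S.phi t x zeroIn‖ ≤ ε := by
  obtain ⟨δ, hδ, hσδ⟩ := hσ.exists_pos_lt_s19 hε
  obtain ⟨τ, -, hreach⟩ := hULIM.exists_norm_phi_zeroIn_le (lt_min hδ hr₀) hR
  refine ⟨τ, fun x hx t ht => ?_⟩
  obtain ⟨s, hs, hsmall⟩ := hreach x hx
  calc ‖S.phi t x zeroIn‖ ≤ σ ‖S.phi s x zeroIn‖ :=
        S.norm_phi_zeroIn_le_of_norm_le hULS hs.1 (hs.2.trans ht)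
          (hsmall.trans (min_le_right _ _))
    _ ≤ σ δ := hσ.2.1.monotoneOn (norm_nonneg _) hδ.le (hsmall.trans (min_le_left _ _))
    _ ≤ ε := hσδ.le

end Trajectories

/-- If a forward complete control system is ULIM, 0-ULS and BRS, then the undisturbed
system is uniformly globally asymptotically stable at zero (0-UGAS). -/
theorem ZeroUGAS_of_ULIM_ZeroULS_BRS (S : ControlSystem X U)
    (h1 : S.ULIM) (h2 : S.ZeroULS) (h3 : S.BRS) :
    ∃ β : ℝ → ℝ → ℝ, ClassKL β ∧
      ∀ x : X, ∀ t : ℝ, 0 ≤ t → ‖S.phi t x zeroIn‖ ≤ β ‖x‖ t := by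
  obtain ⟨σ, hσ, r₀, hr₀, hULS⟩ := h2
  exact exists_classKL_of_uniformlyStable_of_uniformlyAttractive (fun x : X => ‖x‖)
    (fun x t => ‖S.phi t x zeroIn‖) norm_nonneg (fun _ _ => norm_nonneg _) hσ.1 hr₀ hULS
    (fun _ hR => S.exists_uniform_bound_phi_zeroIn hULS h1 h3 hσ.1 hr₀ hR)
    fun _ hε _ hR => S.exists_uniform_attraction_phi_zeroIn hULS h1 hσ.1 hr₀ hε hR

end ControlSystem
end
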